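/- For all finite sets u, v, w of bimodal formulas, if w ∈ CCS(u ∪ v), then there exist v₁ ∈ CCS(u) and v₂ ∈ CCS(v) such that v₁ ∪ v₂ = w. -/
import Mathlib


/-- Bimodal formulas over a countable set of atoms. -/
inductive Fm : Type
  | atom : ℕ → Fm
  | bot  : Fm
  | neg  : Fm → Fm
  | conj : Fm → Fm → Fm
  | boxa : Fm → Fm
  | boxb : Fm → Fm
deriving DecidableEq

open Fm

/-- Modal degree (maximal nesting depth of the modal operators). -/
def deg : Fm → ℕ
  | .atom _ => 0
  | .bot => 0
  | .neg φ => deg φ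
  | .conj φ ψ => max (deg φ) (deg ψ)
  | .boxa φ => deg φ + 1
  | .boxb φ => deg φ + 1

/-- Degree of a finite set of formulas (0 for the empty set). -/
def degS (w : Finset Fm) : ℕ := w.sup deg

/-- `CSF w`: least set of formulas containing `w` and closed under the
classical saturation rules. -/
inductive CSF (w : Finset Fm) : Fm → Prop
  | base {φ} : φ ∈ w → CSF w φ
  | andl {φ ψ} : CSF w (conj φ ψ) → CSF w φ
  | andr {φ ψ} : CSF w (conj φ ψ) → CSF w ψ
  | nandl {φ ψ} : CSF w (neg (conj φ ψ)) → CSF w (neg φ)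
  | nandr {φ ψ} : CSF w (neg (conj φ ψ)) → CSF w (neg ψ)
  | negE {φ} : CSF w (neg φ) → CSF w φ

/-- `CCS u`: the set of consistent classical saturations of `u`. -/
def CCS (u : Finset Fm) : Set (Finset Fm) :=
  { w | u ⊆ w ∧ (∀ φ ∈ w, CSF u φ) ∧
    (∀ φ ψ : Fm, conj φ ψ ∈ w → φ ∈ w ∧ ψ ∈ w) ∧
    (∀ φ ψ : Fm, neg (conj φ ψ) ∈ w → neg φ ∈ w ∨ neg ψ ∈ w) ∧
    (∀ φ : Fm, neg (neg φ) ∈ w → φ ∈ w) ∧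
    bot ∉ w ∧
    (∀ φ : Fm, neg φ ∈ w → φ ∉ w) }

/-- Plain unboxing `□ₐ⁻(w) = {φ : □ₐφ ∈ w}`. -/
def unboxa (w : Finset Fm) : Finset Fm :=
  w.biUnion (fun φ => match φ with | .boxa ψ => {ψ} | _ => ∅)

/-- Plain unboxing `□_b⁻(w) = {φ : □_bφ ∈ w}`. -/
def unboxb (w : Finset Fm) : Finset Fm :=
  w.biUnion (fun φ => match φ with | .boxb ψ => {ψ} | _ => ∅)

/-- Transitive unboxing `□ₐ⁻⁴(w) = {φ, □ₐφ : □ₐφ ∈ w}`. -/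
def unboxa4 (w : Finset Fm) : Finset Fm :=
  w.biUnion (fun φ => match φ with | .boxa ψ => {ψ, .boxa ψ} | _ => ∅)

/-- Transitive unboxing `□_b⁻⁴(w) = {φ, □_bφ : □_bφ ∈ w}`. -/
def unboxb4 (w : Finset Fm) : Finset Fm :=
  w.biUnion (fun φ => match φ with | .boxb ψ => {ψ, .boxb ψ} | _ => ∅)

/-- Standard Kripke satisfaction in a bimodal model `(W, Ra, Rb, V)`. -/
def Sat {W : Type} (Ra Rb : W → W → Prop) (V : ℕ → W → Prop) : W → Fm → Prop
  | x, .atom p => V p x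
  | _, .bot => False
  | x, .neg φ => ¬ Sat Ra Rb V x φ
  | x, .conj φ ψ => Sat Ra Rb V x φ ∧ Sat Ra Rb V x ψ
  | x, .boxa φ => ∀ y, Ra x y → Sat Ra Rb V y φ
  | x, .boxb φ => ∀ y, Rb x y → Sat Ra Rb V y φ

/-- `(ws 0, …, ws k)` is a `k`-window for `w`. -/
def IsWindow (w : Finset Fm) (k : ℕ) (ws : ℕ → Finset Fm) : Prop :=
  ws k ∈ CCS (unboxa w) ∧ ∀ i < k, ws i ∈ CCS (unboxa w ∪ unboxb (ws (i + 1)))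

lemma csf_union {u v : Finset Fm} {φ : Fm} (h : CSF (u ∪ v) φ) :
    CSF u φ ∨ CSF v φ := by
  induction h with
  | base h =>
    rcases Finset.mem_union.1 h with h | h
    · exact Or.inl (CSF.base h)
    · exact Or.inr (CSF.base h)
  | andl _ ih => exact ih.imp CSF.andl CSF.andl
  | andr _ ih => exact ih.imp CSF.andr CSF.andr
  | nandl _ ih => exact ih.imp CSF.nandl CSF.nandl
  | nandr _ ih => exact ih.imp CSF.nandr CSF.nandr
  | negE _ ih => exact ih.imp CSF.negE CSF.negE

open scoped Classical in
/-- if `w ∈ CCS(u ∪ v)` then there are `v₁ ∈ CCS(u)` and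
`v₂ ∈ CCS(v)` with `v₁ ∪ v₂ = w`. -/
theorem stmt1 (u v w : Finset Fm) (hw : w ∈ CCS (u ∪ v)) :
    ∃ v₁ ∈ CCS u, ∃ v₂ ∈ CCS v, v₁ ∪ v₂ = w := by
  obtain ⟨hsub, hcsf, hconj, hnand, hnn, hbot, hneg⟩ := hw
  refine ⟨w.filter (fun φ => CSF u φ), ?_, w.filter (fun φ => CSF v φ), ?_, ?_⟩
  · refine ⟨?_, ?_, ?_, ?_, ?_, ?_, ?_⟩
    · intro φ hφ
      exact Finset.mem_filter.2 ⟨hsub (Finset.mem_union_left _ hφ), CSF.base hφ⟩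
    · intro φ hφ; exact (Finset.mem_filter.1 hφ).2
    · intro φ ψ hφψ
      obtain ⟨hw', hc⟩ := Finset.mem_filter.1 hφψ
      obtain ⟨h1, h2⟩ := hconj φ ψ hw'
      exact ⟨Finset.mem_filter.2 ⟨h1, CSF.andl hc⟩, Finset.mem_filter.2 ⟨h2, CSF.andr hc⟩⟩
    · intro φ ψ hφψ
      obtain ⟨hw', hc⟩ := Finset.mem_filter.1 hφψ
      rcases hnand φ ψ hw' with h | h
      · exact Or.inl (Finset.mem_filter.2 ⟨h, CSF.nandl hc⟩)
      · exact Or.inr (Finset.mem_filter.2 ⟨h, CSF.nandr hc⟩)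
    · intro φ hφ
      obtain ⟨hw', hc⟩ := Finset.mem_filter.1 hφ
      exact Finset.mem_filter.2 ⟨hnn φ hw', CSF.negE (CSF.negE hc)⟩
    · exact fun h => hbot (Finset.mem_filter.1 h).1
    · intro φ hφ h
      exact hneg φ (Finset.mem_filter.1 hφ).1 (Finset.mem_filter.1 h).1
  · refine ⟨?_, ?_, ?_, ?_, ?_, ?_, ?_⟩
    · intro φ hφ
      exact Finset.mem_filter.2 ⟨hsub (Finset.mem_union_right _ hφ), CSF.base hφ⟩
    · intro φ hφ; exact (Finset.mem_filter.1 hφ).2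
    · intro φ ψ hφψ
      obtain ⟨hw', hc⟩ := Finset.mem_filter.1 hφψ
      obtain ⟨h1, h2⟩ := hconj φ ψ hw'
      exact ⟨Finset.mem_filter.2 ⟨h1, CSF.andl hc⟩, Finset.mem_filter.2 ⟨h2, CSF.andr hc⟩⟩
    · intro φ ψ hφψ
      obtain ⟨hw', hc⟩ := Finset.mem_filter.1 hφψ
      rcases hnand φ ψ hw' with h | h
      · exact Or.inl (Finset.mem_filter.2 ⟨h, CSF.nandl hc⟩)
      · exact Or.inr (Finset.mem_filter.2 ⟨h, CSF.nandr hc⟩)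
    · intro φ hφ
      obtain ⟨hw', hc⟩ := Finset.mem_filter.1 hφ
      exact Finset.mem_filter.2 ⟨hnn φ hw', CSF.negE (CSF.negE hc)⟩
    · exact fun h => hbot (Finset.mem_filter.1 h).1
    · intro φ hφ h
      exact hneg φ (Finset.mem_filter.1 hφ).1 (Finset.mem_filter.1 h).1
  · ext φ
    simp only [Finset.mem_union, Finset.mem_filter]
    constructor
    · rintro (⟨h, _⟩ | ⟨h, _⟩) <;> exact h
    · intro h
      rcases csf_union (hcsf φ h) with hc | hc
      · exact Or.inl ⟨h, hc⟩
      · exact Or.inr ⟨h, hc⟩
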